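/- Let v, α ∈ ℕ₀, let m, n ∈ ℕ with n ≥ m, and let x, k, z ∈ ℂ. Then the m-th partial derivative with respect to k of the function k ↦ _Tℬ^{(c,v+α)}_{n,μ}(x+k,z;λ) equals (m!/2^v) · Σ_{r=m}^{n} binomial(n,r) · binomial(r,m) · 𝒢^{(v)}_{r−m,μ}(x;λ) · _Tℬ^{(c,α)}_{n−r,μ}(k,z;λ). -/

import Mathlib

/-!
Parametric kinds of generalized Apostol–Bernoulli polynomials (Özat–Çekim–Kızılateş–Qi).
All generating functions are formal power series in `t` over `ℂ`; each polynomial family is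
`n!` times the `n`-th coefficient of its generating series.
-/

open PowerSeries

noncomputable section

/-- The formal power series `t / (λ eᵗ + μ)`. -/
def bker (lam mu : ℂ) : ℂ⟦X⟧ := X * (C lam * exp ℂ + C mu)⁻¹

/-- The formal power series `e^{x t}`. -/
def expS (x : ℂ) : ℂ⟦X⟧ := rescale x (exp ℂ)

/-- The formal power series `cos (z t)`. -/
def cosS (z : ℂ) : ℂ⟦X⟧ := rescale z (cos ℂ)

/-- The formal power series `sin (z t)`. -/
def sinS (z : ℂ) : ℂ⟦X⟧ := rescale z (sin ℂ)

/-- Parametric (cosine) kind of generalized Apostol–Bernoulli polynomials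
`_Tℬ^{(c,v)}_{n,μ}(x,z;λ)`, defined by
`(t/(λeᵗ+μ))^v e^{xt} U(t) cos(zt) = Σ_n _Tℬ^{(c,v)}_{n,μ}(x,z;λ) tⁿ/n!`. -/
def TBc (lam mu : ℂ) (U : ℂ⟦X⟧) (v n : ℕ) (x z : ℂ) : ℂ :=
  n.factorial * coeff n (bker lam mu ^ v * expS x * U * cosS z)

/-- Parametric (sine) kind of generalized Apostol–Bernoulli polynomials
`_Tℬ^{(s,v)}_{n,μ}(x,z;λ)`, defined by
`(t/(λeᵗ+μ))^v e^{xt} U(t) sin(zt) = Σ_n _Tℬ^{(s,v)}_{n,μ}(x,z;λ) tⁿ/n!`. -/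
def TBs (lam mu : ℂ) (U : ℂ⟦X⟧) (v n : ℕ) (x z : ℂ) : ℂ :=
  n.factorial * coeff n (bker lam mu ^ v * expS x * U * sinS z)

/-- `_Tℬ^{(v)}_{n,μ}(x;λ)`, defined by
`(t/(λeᵗ+μ))^v e^{xt} U(t) = Σ_n _Tℬ^{(v)}_{n,μ}(x;λ) tⁿ/n!`. -/
def TB (lam mu : ℂ) (U : ℂ⟦X⟧) (v n : ℕ) (x : ℂ) : ℂ :=
  n.factorial * coeff n (bker lam mu ^ v * expS x * U)

/-- Cosine generalized Apostol–Bernoulli polynomials `ℬ^{(c,v)}_{n,μ}(x,z;λ)`, defined by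
`(t/(λeᵗ+μ))^v e^{xt} cos(zt) = Σ_n ℬ^{(c,v)}_{n,μ}(x,z;λ) tⁿ/n!`. -/
def Bc (lam mu : ℂ) (v n : ℕ) (x z : ℂ) : ℂ :=
  n.factorial * coeff n (bker lam mu ^ v * expS x * cosS z)

/-- Sine generalized Apostol–Bernoulli polynomials `ℬ^{(s,v)}_{n,μ}(x,z;λ)`. -/
def Bs (lam mu : ℂ) (v n : ℕ) (x z : ℂ) : ℂ :=
  n.factorial * coeff n (bker lam mu ^ v * expS x * sinS z)

/-- Generalized Apostol–Bernoulli polynomials of order `v`: `ℬ^{(v)}_{n,μ}(x;λ)`, defined by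
`(t/(λeᵗ+μ))^v e^{xt} = Σ_n ℬ^{(v)}_{n,μ}(x;λ) tⁿ/n!`. -/
def Bpoly (lam mu : ℂ) (v n : ℕ) (x : ℂ) : ℂ :=
  n.factorial * coeff n (bker lam mu ^ v * expS x)

/-- Generalized Apostol–Bernoulli numbers `ℬ^{(v)}_{n,μ}(λ) := ℬ^{(v)}_{n,μ}(0;λ)`. -/
def Bnum (lam mu : ℂ) (v n : ℕ) : ℂ := Bpoly lam mu v n 0

/-- The 2-variable general polynomials `T_n(x)`, defined by `e^{xt} U(t) = Σ_n T_n(x) tⁿ/n!`. -/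
def Tpoly (U : ℂ⟦X⟧) (n : ℕ) (x : ℂ) : ℂ := n.factorial * coeff n (expS x * U)

/-- `U_n := n!` times the `n`-th coefficient of `U`. -/
def Unum (U : ℂ⟦X⟧) (n : ℕ) : ℂ := n.factorial * coeff n U

/-- `C_n(x,y)`, defined by `e^{xt} cos(yt) = Σ_n C_n(x,y) tⁿ/n!`. -/
def Cpoly (n : ℕ) (x y : ℂ) : ℂ := n.factorial * coeff n (expS x * cosS y)

/-- `S_n(x,y)`, defined by `e^{xt} sin(yt) = Σ_n S_n(x,y) tⁿ/n!`. -/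
def Spoly (n : ℕ) (x y : ℂ) : ℂ := n.factorial * coeff n (expS x * sinS y)

/-- Apostol–Bernoulli numbers of order `δ`: `ℬ^{(δ)}_n(Λ)`, defined by
`(t/(Λeᵗ−1))^δ = Σ_n ℬ^{(δ)}_n(Λ) tⁿ/n!`. -/
def ABnum (L : ℂ) (d n : ℕ) : ℂ :=
  n.factorial * coeff n ((X * (C L * exp ℂ - 1)⁻¹) ^ d)

/-- Generalized Apostol–Genocchi polynomials `𝒢^{(v)}_{n,μ}(x;λ)`, defined by
`(2t/(λeᵗ+μ))^v e^{xt} = Σ_n 𝒢^{(v)}_{n,μ}(x;λ) tⁿ/n!`. -/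
def Gpoly (lam mu : ℂ) (v n : ℕ) (x : ℂ) : ℂ :=
  n.factorial * coeff n ((C 2 * X * (C lam * exp ℂ + C mu)⁻¹) ^ v * expS x)

end

/-!
Since `e^{(x+k)t} = e^{kt} e^{xt}` and `∂ₖ e^{kt} = t e^{kt}`, differentiating `m` times in `k`
multiplies the generating function by `tᵐ`, i.e. shifts its coefficients down by `m`. Splitting
`(t/(λeᵗ+μ))^{v+α} = 2^{-v} (2t/(λeᵗ+μ))^v · (t/(λeᵗ+μ))^α` and taking the Cauchy product of the
two resulting generating functions gives the sum, after rewriting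
`n! = m! · C(n,r) · C(r,m) · (r-m)! · (n-r)!`.
-/

open PowerSeries Finset

lemma coeff_expS (x : ℂ) (n : ℕ) : coeff n (expS x) = x ^ n / n.factorial := by
  simp only [expS, coeff_rescale, coeff_exp, algebraMap, one_div, map_inv₀, map_natCast]
  ring

lemma expS_add (x y : ℂ) : expS (x + y) = expS x * expS y :=
  (exp_mul_exp_eq_exp_add x y).symm

lemma hasDerivAt_coeff_succ_expS (n : ℕ) (x : ℂ) :
    HasDerivAt (fun x => coeff (n + 1) (expS x)) (coeff n (expS x)) x := by
  simp only [coeff_expS]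
  refine ((hasDerivAt_pow (n + 1) x).div_const ((n + 1).factorial : ℂ)).congr_deriv ?_
  rw [Nat.factorial_succ]
  push_cast
  field_simp

lemma hasDerivAt_coeff_succ_expS_mul (P : ℂ⟦X⟧) (n : ℕ) (x : ℂ) :
    HasDerivAt (fun x => coeff (n + 1) (expS x * P)) (coeff n (expS x * P)) x := by
  have hcoeff_zero (y : ℂ) : coeff 0 (expS y) = 1 := by simp [coeff_expS]
  simp only [coeff_mul, Finset.Nat.sum_antidiagonal_succ, hcoeff_zero, one_mul]
  exact (HasDerivAt.fun_sum fun p _ =>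
    (hasDerivAt_coeff_succ_expS p.1 x).mul_const (coeff p.2 P)).const_add _

lemma iteratedDeriv_const_mul_coeff_expS_mul (P : ℂ⟦X⟧) (c : ℂ) (n m : ℕ) :
    iteratedDeriv m (fun x => c * coeff (n + m) (expS x * P)) =
      fun x => c * coeff n (expS x * P) := by
  induction m with
  | zero => simp
  | succ m ih =>
    have hderiv : deriv (fun x => c * coeff (n + (m + 1)) (expS x * P)) =
        fun x => c * coeff (n + m) (expS x * P) :=
      funext fun x => ((hasDerivAt_coeff_succ_expS_mul P (n + m) x).const_mul c).deriv
    rw [iteratedDeriv_succ', hderiv, ih]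

lemma factorial_eq_factorial_mul_choose_mul_choose {m r n : ℕ} (hmr : m ≤ r) (hrn : r ≤ n) :
    n.factorial = m.factorial * n.choose r * r.choose m * (r - m).factorial * (n - r).factorial := by
  rw [← Nat.choose_mul_factorial_mul_factorial hrn, ← Nat.choose_mul_factorial_mul_factorial hmr]
  ring

lemma factorial_mul_coeff_sub_mul {R : Type*} [CommSemiring R] (A B : R⟦X⟧) {m n : ℕ}
    (hmn : m ≤ n) :
    (n.factorial : R) * coeff (n - m) (A * B) =
      m.factorial * ∑ r ∈ Icc m n, (n.choose r : R) * r.choose m *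
        ((r - m).factorial * coeff (r - m) A) * ((n - r).factorial * coeff (n - r) B) := by
  rw [coeff_mul, Finset.Nat.sum_antidiagonal_eq_sum_range_succ_mk, ← Ico_add_one_right_eq_Icc,
    sum_Ico_eq_sum_range, Nat.sub_add_comm hmn, mul_sum, mul_sum]
  refine sum_congr rfl fun s hs => ?_
  have hs : s ≤ n - m := Nat.lt_succ_iff.mp (mem_range.mp hs)
  rw [Nat.add_sub_cancel_left, show n - (m + s) = n - m - s by omega,
    factorial_eq_factorial_mul_choose_mul_choose (Nat.le_add_right m s) (by omega : m + s ≤ n),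
    Nat.add_sub_cancel_left, show n - (m + s) = n - m - s by omega]
  push_cast
  ring

lemma genocchi_kernel_pow (lam mu : ℂ) (v : ℕ) :
    (C 2 * X * (C lam * exp ℂ + C mu)⁻¹) ^ v = C (2 ^ v) * bker lam mu ^ v := by
  rw [bker, map_pow, ← mul_pow, mul_assoc]

theorem stmt18_general (lam mu : ℂ) (U : ℂ⟦X⟧)
    (v α : ℕ) (m n : ℕ) (hmn : m ≤ n) (x k z : ℂ) :
    iteratedDeriv m (fun k : ℂ => TBc lam mu U (v + α) n (x + k) z) k
      = (m.factorial : ℂ) / 2 ^ v *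
          ∑ r ∈ Finset.Icc m n,
            (n.choose r : ℂ) * (r.choose m : ℂ) * Gpoly lam mu v (r - m) x *
              TBc lam mu U α (n - r) k z := by
  have hshift : (fun k => TBc lam mu U (v + α) n (x + k) z) =
      fun k => (n.factorial : ℂ) * coeff (n - m + m)
        (expS k * (bker lam mu ^ (v + α) * expS x * U * cosS z)) := by
    funext k
    rw [TBc, Nat.sub_add_cancel hmn, expS_add]
    congr 2
    ring
  have hsplit : expS k * (bker lam mu ^ (v + α) * expS x * U * cosS z) = C (2 ^ v)⁻¹ *
      ((C 2 * X * (C lam * exp ℂ + C mu)⁻¹) ^ v * expS x *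
        (bker lam mu ^ α * expS k * U * cosS z)) := by
    have hC : C ((2 : ℂ) ^ v)⁻¹ * C (2 ^ v) = 1 := by
      rw [← map_mul, inv_mul_cancel₀ (by norm_num), map_one]
    rw [genocchi_kernel_pow]
    linear_combination (-(bker lam mu ^ (v + α) * expS x * expS k * U * cosS z)) * hC
  rw [hshift, iteratedDeriv_const_mul_coeff_expS_mul]
  beta_reduce
  rw [hsplit, coeff_C_mul, mul_left_comm, factorial_mul_coeff_sub_mul _ _ hmn]
  simp only [Gpoly, TBc]
  ring

theorem stmt18 (lam mu : ℂ) (hlm : lam + mu ≠ 0) (U : ℂ⟦X⟧) (hU : PowerSeries.coeff 0 U ≠ 0)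
    (v α : ℕ) (m n : ℕ) (hm : 1 ≤ m) (hmn : m ≤ n) (x k z : ℂ) :
    iteratedDeriv m (fun k : ℂ => TBc lam mu U (v + α) n (x + k) z) k
      = (m.factorial : ℂ) / 2 ^ v *
          ∑ r ∈ Finset.Icc m n,
            (n.choose r : ℂ) * (r.choose m : ℂ) * Gpoly lam mu v (r - m) x *
              TBc lam mu U α (n - r) k z :=
  stmt18_general lam mu U v α m n hmn x k z
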